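/- arXiv:2210.00726 — 2 statements merged into one kernel-verified Lean document; each statement's English description precedes it below -/
import Mathlib

section
/- Let p and q be probability distributions on a finite product space, with q strictly positive, and suppose q satisfies approximate tensorization of entropy with constant C_{AT}: D_KL(p,q) ≤ C_{AT} Σ_i E_{X∼p}[ D_KL(p(X_i|X_{∼i}), q(X_i|X_{∼i})) ] for all p. Then D_KL(p,q) ≤ C_{AT} (L_p(p) − L_p(q)), where L_p is the pseudolikelihood objective L_p(q) = Σ_i E_{X∼p}[log q(X_i | X_{∼i})]. -/
open Finset

noncomputable section

variable {d : ℕ} {Ω : Fin d → Type*} [∀ i, Fintype (Ω i)] [∀ i, DecidableEq (Ω i)]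

/-- Conditional probability `p(x_i | x_{∼i})` of the `i`-th coordinate given the rest. -/
def condProb (p : (∀ i, Ω i) → ℝ) (i : Fin d) (x : ∀ i, Ω i) : ℝ :=
  p x / ∑ y : Ω i, p (Function.update x i y)

/-- Pseudolikelihood objective `L_p(q) = Σ_i E_{X∼p}[log q(X_i | X_{∼i})]`. -/
def pseudoLik (p q : (∀ i, Ω i) → ℝ) : ℝ :=
  ∑ i : Fin d, ∑ x : ∀ i, Ω i, p x * Real.log (condProb q i x)

/-- `E_{X∼p}[ D_KL( p(X_i|X_{∼i}) , q(X_i|X_{∼i}) ) ]`. -/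
def expCondKL (p q : (∀ i, Ω i) → ℝ) (i : Fin d) : ℝ :=
  ∑ x : ∀ i, Ω i, p x * ∑ y : Ω i,
    condProb p i (Function.update x i y) *
      Real.log (condProb p i (Function.update x i y) / condProb q i (Function.update x i y))

/-- Discrete KL divergence `D_KL(p,q) = Σ_x p(x) log(p(x)/q(x))`. -/
def KLdiv (p q : (∀ i, Ω i) → ℝ) : ℝ :=
  ∑ x : ∀ i, Ω i, p x * Real.log (p x / q x)

/-
Writing `p(x) = p(x_{∼i}) p(x_i | x_{∼i})`, averaging over the conditional law of the `i`-th
coordinate and then over `p` is the same as averaging over `p`. Hence each expected conditional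
divergence equals `E_p[log p(X_i | X_{∼i}) - log q(X_i | X_{∼i})]`, their sum is
`L_p(p) - L_p(q)`, and approximate tensorization becomes the claimed bound.
-/

section ResampleCoordinate

variable {ι : Type*} [DecidableEq ι] {α : ι → Type*} [∀ i, Fintype (α i)]
  [Fintype (∀ i, α i)] {R : Type*} [NonUnitalNonAssocSemiring R]

theorem sum_mul_sum_update_eq_sum_sum_update_mul (p G : (∀ i, α i) → R) (i : ι) :
    ∑ x, p x * ∑ y : α i, G (Function.update x i y)
      = ∑ z, (∑ y : α i, p (Function.update z i y)) * G z := by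
  let e : Equiv.Perm ((∀ i, α i) × α i) :=
    Function.Involutive.toPerm (fun xy => (Function.update xy.1 i xy.2, xy.1 i))
      fun xy => by simp
  calc ∑ x, p x * ∑ y : α i, G (Function.update x i y)
      = ∑ xy : (∀ i, α i) × α i, p xy.1 * G (Function.update xy.1 i xy.2) := by
        simp only [Finset.mul_sum, Fintype.sum_prod_type]
    _ = ∑ zy : (∀ i, α i) × α i, p (Function.update zy.1 i zy.2) * G zy.1 :=
        Fintype.sum_equiv e _ _ fun xy => by simp [e, Function.Involutive.toPerm]
    _ = ∑ z, (∑ y : α i, p (Function.update z i y)) * G z := by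
        simp only [Fintype.sum_prod_type, Finset.sum_mul]

end ResampleCoordinate

section ConditionalProbability

omit [∀ i, DecidableEq (Ω i)]

theorem sum_update_mul_condProb {p : (∀ i, Ω i) → ℝ} {i : Fin d} {x : ∀ i, Ω i}
    (hx : ∑ y : Ω i, p (Function.update x i y) ≠ 0) :
    (∑ y : Ω i, p (Function.update x i y)) * condProb p i x = p x :=
  mul_div_cancel₀ _ hx

theorem condProb_pos {q : (∀ i, Ω i) → ℝ} (hq : ∀ x, 0 < q x) (i : Fin d) (x : ∀ i, Ω i) :
    0 < condProb q i x :=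
  div_pos (hq x) (Finset.sum_pos (fun _ _ => hq _) ⟨x i, Finset.mem_univ _⟩)

theorem condProb_ne_zero {p : (∀ i, Ω i) → ℝ} {i : Fin d} {x : ∀ i, Ω i} (hpx : p x ≠ 0)
    (hx : ∑ y : Ω i, p (Function.update x i y) ≠ 0) : condProb p i x ≠ 0 :=
  div_ne_zero hpx hx

theorem expCondKL_eq_sum_mul_log_div {p : (∀ i, Ω i) → ℝ} (q : (∀ i, Ω i) → ℝ) {i : Fin d}
    (hp : ∀ x, ∑ y : Ω i, p (Function.update x i y) ≠ 0) :
    expCondKL p q i = ∑ x, p x * Real.log (condProb p i x / condProb q i x) := by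
  rw [expCondKL, sum_mul_sum_update_eq_sum_sum_update_mul p
    fun z => condProb p i z * Real.log (condProb p i z / condProb q i z)]
  refine Finset.sum_congr rfl fun x _ => ?_
  rw [← mul_assoc, sum_update_mul_condProb (hp x)]

theorem sum_expCondKL_eq_pseudoLik_sub {p q : (∀ i, Ω i) → ℝ} (hq : ∀ x, 0 < q x)
    (hp : ∀ i x, ∑ y : Ω i, p (Function.update x i y) ≠ 0) :
    ∑ i, expCondKL p q i = pseudoLik p p - pseudoLik p q := by
  rw [pseudoLik, pseudoLik, ← Finset.sum_sub_distrib]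
  refine Finset.sum_congr rfl fun i _ => ?_
  rw [expCondKL_eq_sum_mul_log_div q (hp i), ← Finset.sum_sub_distrib]
  refine Finset.sum_congr rfl fun x _ => ?_
  by_cases hpx : p x = 0
  · simp [hpx]
  · rw [Real.log_div (condProb_ne_zero hpx (hp i x)) (condProb_pos hq i x).ne', mul_sub]

end ConditionalProbability

theorem approx_tensorization_implies_pseudolikelihood_bound_general
    (q : (∀ i, Ω i) → ℝ) (hq0 : ∀ x, 0 < q x)
    (C_AT : ℝ)
    (hAT : ∀ p : (∀ i, Ω i) → ℝ, (∀ x, 0 ≤ p x) → (∑ x : ∀ i, Ω i, p x = 1) →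
      (∀ (i : Fin d) (x : ∀ i, Ω i), 0 < ∑ y : Ω i, p (Function.update x i y)) →
      KLdiv p q ≤ C_AT * ∑ i : Fin d, expCondKL p q i)
    (p : (∀ i, Ω i) → ℝ) (hp0 : ∀ x, 0 ≤ p x) (hp1 : ∑ x : ∀ i, Ω i, p x = 1)
    (hpmarg : ∀ (i : Fin d) (x : ∀ i, Ω i), 0 < ∑ y : Ω i, p (Function.update x i y)) :
    KLdiv p q ≤ C_AT * (pseudoLik p p - pseudoLik p q) := by
  rw [← sum_expCondKL_eq_pseudoLik_sub hq0 fun i x => (hpmarg i x).ne']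
  exact hAT p hp0 hp1 hpmarg

/-- If `q > 0` satisfies approximate tensorization of entropy with constant `C_AT`:
`D_KL(p,q) ≤ C_AT Σ_i E_{X∼p}[D_KL(p(X_i|X_{∼i}), q(X_i|X_{∼i}))]` for all `p`, then
`D_KL(p,q) ≤ C_AT (L_p(p) − L_p(q))` for the pseudolikelihood objective `L_p`. -/
theorem approx_tensorization_implies_pseudolikelihood_bound
    (q : (∀ i, Ω i) → ℝ) (hq0 : ∀ x, 0 < q x) (hq1 : ∑ x : ∀ i, Ω i, q x = 1)
    (C_AT : ℝ)
    (hAT : ∀ p : (∀ i, Ω i) → ℝ, (∀ x, 0 ≤ p x) → (∑ x : ∀ i, Ω i, p x = 1) →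
      (∀ (i : Fin d) (x : ∀ i, Ω i), 0 < ∑ y : Ω i, p (Function.update x i y)) →
      KLdiv p q ≤ C_AT * ∑ i : Fin d, expCondKL p q i)
    (p : (∀ i, Ω i) → ℝ) (hp0 : ∀ x, 0 ≤ p x) (hp1 : ∑ x : ∀ i, Ω i, p x = 1)
    (hpmarg : ∀ (i : Fin d) (x : ∀ i, Ω i), 0 < ∑ y : Ω i, p (Function.update x i y)) :
    KLdiv p q ≤ C_AT * (pseudoLik p p - pseudoLik p q) :=
  approx_tensorization_implies_pseudolikelihood_bound_general q hq0 C_AT hAT p hp0 hp1 hpmarg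

end
end

section
/- For the one-dimensional potential F_1(x) = −(1/(8a²))(x−a)²(x+a)² with a > 1 and the density p(x) ∝ e^{F_1(x)}, there is a constant C' > 0 independent of a such that Pr_{X∼p}(X ∈ [a−1, a+1]) ≥ C'. -/
/-!
On each half-line the quartic potential is dominated by a Gaussian centred at the nearer
mode: for `x ≥ 0` one has `(x + a)² ≥ a²`, so `F₁(x) ≤ -(x - a)² / 8`, and symmetrically for
`x ≤ 0`. Hence the normalising constant is at most twice the Gaussian integral `√(8π)`, for every
`a`. On `[a - 1, a + 1]` one has `(x - a)² ≤ 1` and `(x + a)² ≤ 9a²`, so `F₁ ≥ -9/8` there and the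
numerator is at least `2 e^{-9/8}`.
-/

open MeasureTheory Real

noncomputable section

def bimodalPot (a x : ℝ) : ℝ := -(1 / (8 * a ^ 2)) * (x - a) ^ 2 * (x + a) ^ 2

lemma integrable_exp_neg_mul_sq_sub {b : ℝ} (hb : 0 < b) (c : ℝ) :
    Integrable fun x : ℝ => exp (-b * (x - c) ^ 2) :=
  (integrable_exp_neg_mul_sq hb).comp_sub_right c

lemma integral_exp_neg_mul_sq_sub (b c : ℝ) :
    ∫ x : ℝ, exp (-b * (x - c) ^ 2) = √(π / b) := by
  rw [integral_sub_right_eq_self (fun x => exp (-b * x ^ 2)) c, integral_gaussian]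

lemma bimodalPot_neg (a x : ℝ) : bimodalPot a (-x) = bimodalPot a x := by
  unfold bimodalPot; ring

lemma continuous_bimodalPot (a : ℝ) : Continuous (bimodalPot a) := by
  unfold bimodalPot; fun_prop

lemma bimodalPot_eq_div (a x : ℝ) :
    bimodalPot a x = -((x - a) ^ 2 * (x + a) ^ 2) / (8 * a ^ 2) := by
  unfold bimodalPot; ring

lemma bimodalPot_le_of_nonneg {a x : ℝ} (ha : 0 < a) (hx : 0 ≤ x) :
    bimodalPot a x ≤ -(1 / 8) * (x - a) ^ 2 := by
  have hsq : a ^ 2 ≤ (x + a) ^ 2 := pow_le_pow_left₀ ha.le (by linarith) 2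
  rw [bimodalPot_eq_div, div_le_iff₀ (by positivity)]
  nlinarith [mul_le_mul_of_nonneg_left hsq (sq_nonneg (x - a))]

lemma exp_bimodalPot_le {a : ℝ} (ha : 0 < a) (x : ℝ) :
    exp (bimodalPot a x) ≤ exp (-(1 / 8) * (x - a) ^ 2) + exp (-(1 / 8) * (x - -a) ^ 2) := by
  rcases le_total 0 x with hx | hx
  · exact (exp_le_exp.2 (bimodalPot_le_of_nonneg ha hx)).trans
      (le_add_of_nonneg_right (exp_pos _).le)
  · have h := bimodalPot_le_of_nonneg ha (neg_nonneg.2 hx)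
    rw [bimodalPot_neg, show (-x - a) ^ 2 = (x - -a) ^ 2 by ring] at h
    exact (exp_le_exp.2 h).trans (le_add_of_nonneg_left (exp_pos _).le)

lemma integrable_exp_bimodalPot {a : ℝ} (ha : 0 < a) :
    Integrable fun x => exp (bimodalPot a x) := by
  refine Integrable.mono'
    ((integrable_exp_neg_mul_sq_sub (b := 1 / 8) (by norm_num) a).add
      (integrable_exp_neg_mul_sq_sub (b := 1 / 8) (by norm_num) (-a)))
    (continuous_exp.comp (continuous_bimodalPot a)).aestronglyMeasurable
    (Filter.Eventually.of_forall fun x => ?_)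
  rw [norm_of_nonneg (exp_pos _).le]
  exact exp_bimodalPot_le ha x

lemma integral_exp_bimodalPot_le {a : ℝ} (ha : 0 < a) :
    ∫ x, exp (bimodalPot a x) ≤ 2 * √(8 * π) := by
  have hgauss (c : ℝ) : ∫ x : ℝ, exp (-(1 / 8) * (x - c) ^ 2) = √(8 * π) := by
    rw [integral_exp_neg_mul_sq_sub]; congr 1; ring
  have hint (c : ℝ) := integrable_exp_neg_mul_sq_sub (b := 1 / 8) (by norm_num) c
  calc ∫ x, exp (bimodalPot a x)
      ≤ ∫ x, (exp (-(1 / 8) * (x - a) ^ 2) + exp (-(1 / 8) * (x - -a) ^ 2)) :=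
        integral_mono (integrable_exp_bimodalPot ha) ((hint a).add (hint (-a)))
          (exp_bimodalPot_le ha)
    _ = 2 * √(8 * π) := by
        rw [integral_add (hint a) (hint (-a)), hgauss, hgauss]
        ring

lemma neg_nine_div_eight_le_bimodalPot {a x : ℝ} (ha : 1 ≤ a) (hx : x ∈ Set.Icc (a - 1) (a + 1)) :
    -(9 / 8) ≤ bimodalPot a x := by
  obtain ⟨hx₁, hx₂⟩ := hx
  have hnear : (x - a) ^ 2 ≤ 1 := by nlinarith
  have hfar : (x + a) ^ 2 ≤ 9 * a ^ 2 := by nlinarith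
  have hprod : (x - a) ^ 2 * (x + a) ^ 2 ≤ 9 * a ^ 2 := by
    nlinarith [mul_le_mul hnear hfar (sq_nonneg _) zero_le_one]
  rw [bimodalPot_eq_div, le_div_iff₀ (by positivity)]
  linarith

lemma two_mul_exp_le_setIntegral_exp_bimodalPot {a : ℝ} (ha : 1 ≤ a) :
    2 * exp (-(9 / 8)) ≤ ∫ x in Set.Icc (a - 1) (a + 1), exp (bimodalPot a x) := by
  have h := setIntegral_ge_of_const_le_real measurableSet_Icc measure_Icc_lt_top.ne
    (fun x hx => exp_le_exp.2 (neg_nine_div_eight_le_bimodalPot ha hx))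
    (integrable_exp_bimodalPot (by linarith)).integrableOn
  rwa [volume_real_Icc_of_le (by linarith), show a + 1 - (a - 1) = 2 by ring,
    mul_comm] at h

/-- For the one-dimensional density `p(x) ∝ exp(F₁(x))` with
`F₁(x) = −(1/(8a²))(x−a)²(x+a)²` and `a > 1`, there is a constant `C' > 0` independent of
`a` such that `Pr_{X∼p}(X ∈ [a−1, a+1]) ≥ C'`. -/
theorem bimodal_mass_near_mode :
    ∃ C' : ℝ, 0 < C' ∧ ∀ a : ℝ, 1 < a →
      C' ≤ (∫ x in Set.Icc (a - 1) (a + 1), Real.exp (bimodalPot a x)) /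
        (∫ x : ℝ, Real.exp (bimodalPot a x)) := by
  refine ⟨2 * exp (-(9 / 8)) / (2 * √(8 * π)), by positivity, fun a ha => ?_⟩
  have hZ : 0 < ∫ x, exp (bimodalPot a x) :=
    integral_exp_pos (integrable_exp_bimodalPot (by linarith))
  exact div_le_div₀ (by positivity) (two_mul_exp_le_setIntegral_exp_bimodalPot ha.le) hZ
    (integral_exp_bimodalPot_le (by linarith))

end
end
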